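/- arXiv:2108.13174 — 2 statements merged into one kernel-verified Lean document; each statement's English description precedes it below -/
import Mathlib

section
/- The dark soliton ψ(x,t) = A₀√(−2g₁/g₂) · tanh(A₀(x − x₀ − kt)) · exp(−i[−(k/(2g₁))(x − x₀) + ((8g₁²A₀² + k²)/(4g₁))(t − t₀) + φ₀]) satisfies the nonlinear Schrödinger equation i∂ψ/∂t + g₁∂²ψ/∂x² + g₂|ψ|²ψ = 0. -/
/-!
Write `ψ = c · tanh ξ · e^{-iθ}` with `ξ = A (x - (x₀ + k t))` and `θ = α (x - x₀) + γ (t - t₀) + φ₀`.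
Since `tanh' = 1 - tanh²`, every derivative of `ψ` is again a polynomial in `tanh ξ` times
`c e^{-iθ}`, and the residual of `i ψ_t + g₁ ψ_xx + g₂ |ψ|² ψ` collects into three terms:
`i (1 - tanh² ξ)` with coefficient `-A (k + 2 g₁ α)`, `tanh ξ` with `γ - 2 g₁ A² - g₁ α²`, and
`tanh³ ξ` with `g₂ c² + 2 g₁ A²`. The dark soliton's parameters make all three vanish.
-/

open Complex (I)

theorem Real.hasDerivAt_tanh (x : ℝ) : HasDerivAt Real.tanh (1 - Real.tanh x ^ 2) x := by
  have hcosh : Real.cosh x ≠ 0 := (Real.cosh_pos x).ne'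
  refine (((Real.hasDerivAt_sinh x).div (Real.hasDerivAt_cosh x) hcosh).congr_deriv ?_
    ).congr_of_eventuallyEq (.of_forall Real.tanh_eq_sinh_div_cosh)
  rw [Real.tanh_eq_sinh_div_cosh]
  field_simp

theorem HasDerivAt.tanh {f : ℝ → ℝ} {f' x : ℝ} (hf : HasDerivAt f f' x) :
    HasDerivAt (fun y => Real.tanh (f y)) ((1 - Real.tanh (f x) ^ 2) * f') x :=
  (Real.hasDerivAt_tanh (f x)).comp x hf

theorem HasDerivAt.mul_cexp_neg_I_mul {f : ℝ → ℂ} {θ : ℝ → ℝ} {f' : ℂ} {θ' x : ℝ}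
    (hf : HasDerivAt f f' x) (hθ : HasDerivAt θ θ' x) :
    HasDerivAt (fun y => f y * Complex.exp (-I * θ y))
      ((f' - I * θ' * f x) * Complex.exp (-I * θ x)) x :=
  (hf.mul (hθ.ofReal_comp.const_mul (-I)).cexp).congr_deriv (by ring)

theorem hasDerivAt_mul_sub_const (a b x : ℝ) : HasDerivAt (fun z => a * (z - b)) a x :=
  (((hasDerivAt_id' x).sub_const b).const_mul a).congr_deriv (mul_one a)

section TanhWave

variable (c A x₀ k α γ t₀ φ₀ : ℝ)

noncomputable def tanhWave (x t : ℝ) : ℂ :=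
  ((c * Real.tanh (A * (x - (x₀ + k * t))) : ℝ) : ℂ) *
    Complex.exp (-I * ((α * (x - x₀) + γ * (t - t₀) + φ₀ : ℝ) : ℂ))

theorem hasDerivAt_tanhWave_time (x t : ℝ) :
    HasDerivAt (fun s => tanhWave c A x₀ k α γ t₀ φ₀ x s)
      (c * (-(A * k) * (1 - Real.tanh (A * (x - (x₀ + k * t))) ^ 2)
          - I * γ * Real.tanh (A * (x - (x₀ + k * t))))
        * Complex.exp (-I * ((α * (x - x₀) + γ * (t - t₀) + φ₀ : ℝ) : ℂ))) t := by
  have hξ : HasDerivAt (fun s => A * (x - (x₀ + k * s))) (-(A * k)) t :=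
    ((((hasDerivAt_id' t).const_mul k).const_add x₀).const_sub x |>.const_mul A).congr_deriv
      (by ring)
  have hθ : HasDerivAt (fun s => α * (x - x₀) + γ * (s - t₀) + φ₀) γ t :=
    ((((hasDerivAt_id' t).sub_const t₀).const_mul γ).const_add _ |>.add_const φ₀).congr_deriv
      (mul_one γ)
  exact ((hξ.tanh.const_mul c).ofReal_comp.mul_cexp_neg_I_mul hθ).congr_deriv (by push_cast; ring)

theorem hasDerivAt_tanhWave_space (x t : ℝ) :
    HasDerivAt (fun z => tanhWave c A x₀ k α γ t₀ φ₀ z t)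
      (c * (A * (1 - Real.tanh (A * (x - (x₀ + k * t))) ^ 2)
          - I * α * Real.tanh (A * (x - (x₀ + k * t))))
        * Complex.exp (-I * ((α * (x - x₀) + γ * (t - t₀) + φ₀ : ℝ) : ℂ))) x := by
  have hξ := hasDerivAt_mul_sub_const A (x₀ + k * t) x
  have hθ := ((hasDerivAt_mul_sub_const α x₀ x).add_const (γ * (t - t₀))).add_const φ₀
  exact ((hξ.tanh.const_mul c).ofReal_comp.mul_cexp_neg_I_mul hθ).congr_deriv (by push_cast; ring)

theorem hasDerivAt_deriv_tanhWave_space (x t : ℝ) :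
    HasDerivAt (deriv fun z => tanhWave c A x₀ k α γ t₀ φ₀ z t)
      (c * (-2 * A ^ 2 * Real.tanh (A * (x - (x₀ + k * t)))
              * (1 - Real.tanh (A * (x - (x₀ + k * t))) ^ 2)
          - 2 * I * α * A * (1 - Real.tanh (A * (x - (x₀ + k * t))) ^ 2)
          - α ^ 2 * Real.tanh (A * (x - (x₀ + k * t))))
        * Complex.exp (-I * ((α * (x - x₀) + γ * (t - t₀) + φ₀ : ℝ) : ℂ))) x := by
  rw [funext fun y => (hasDerivAt_tanhWave_space c A x₀ k α γ t₀ φ₀ y t).deriv]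
  have hξ := hasDerivAt_mul_sub_const A (x₀ + k * t) x
  have hθ := ((hasDerivAt_mul_sub_const α x₀ x).add_const (γ * (t - t₀))).add_const φ₀
  have hτ := hξ.tanh.ofReal_comp
  have hf := (((hτ.pow 2).const_sub 1).const_mul (A : ℂ)).sub (hτ.const_mul (I * α))
    |>.const_mul (c : ℂ)
  exact (hf.mul_cexp_neg_I_mul hθ).congr_deriv (by
    simp only [Pi.sub_apply, Pi.pow_apply]
    push_cast
    ring_nf
    rw [Complex.I_sq]
    ring)

theorem norm_tanhWave (x t : ℝ) :
    ‖tanhWave c A x₀ k α γ t₀ φ₀ x t‖ = |c * Real.tanh (A * (x - (x₀ + k * t)))| := by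
  rw [tanhWave, norm_mul, Complex.norm_real, Real.norm_eq_abs, Complex.norm_exp]
  simp

theorem tanhWave_solves_nlse {g₁ g₂ : ℝ} (hk : k = -2 * g₁ * α)
    (hγ : γ = 2 * g₁ * A ^ 2 + g₁ * α ^ 2) (hc : g₂ * c ^ 2 = -2 * g₁ * A ^ 2) (x t : ℝ) :
    I * deriv (fun s => tanhWave c A x₀ k α γ t₀ φ₀ x s) t
      + g₁ * deriv (fun y => deriv (fun z => tanhWave c A x₀ k α γ t₀ φ₀ z t) y) x
      + g₂ * (‖tanhWave c A x₀ k α γ t₀ φ₀ x t‖ : ℂ) ^ 2 * tanhWave c A x₀ k α γ t₀ φ₀ x t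
      = 0 := by
  rw [← Complex.ofReal_pow, norm_tanhWave, sq_abs, (hasDerivAt_tanhWave_time ..).deriv,
    (hasDerivAt_deriv_tanhWave_space ..).deriv, tanhWave]
  set τ := Real.tanh (A * (x - (x₀ + k * t)))
  set E := Complex.exp (-I * ((α * (x - x₀) + γ * (t - t₀) + φ₀ : ℝ) : ℂ))
  have hk' : (k : ℂ) = -2 * g₁ * α := by exact_mod_cast hk
  have hγ' : (γ : ℂ) = 2 * g₁ * A ^ 2 + g₁ * α ^ 2 := by exact_mod_cast hγ
  have hc' : (g₂ : ℂ) * c ^ 2 = -2 * g₁ * A ^ 2 := by exact_mod_cast hc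
  push_cast
  linear_combination (-I * A * (1 - τ ^ 2) * c * E) * hk' + (τ * c * E) * hγ'
    + (τ ^ 3 * c * E) * hc' + (-γ * τ * c * E) * Complex.I_sq

end TanhWave

/-- The moving dark soliton satisfies the nonlinear Schrödinger equation. -/
theorem dark_soliton_solves_nlse (g₁ g₂ A₀ k x₀ t₀ φ₀ : ℝ)
    (hg : g₁ * g₂ < 0) (hg₁ : g₁ ≠ 0)
    (ψ : ℝ → ℝ → ℂ)
    (hψ : ∀ x t : ℝ, ψ x t =
      ((A₀ * Real.sqrt (-2 * g₁ / g₂) * Real.tanh (A₀ * (x - (x₀ + k * t))) : ℝ) : ℂ) *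
        Complex.exp (-Complex.I *
          ((-(k / (2 * g₁)) * (x - x₀) + (8 * g₁ ^ 2 * A₀ ^ 2 + k ^ 2) / (4 * g₁) * (t - t₀) + φ₀ : ℝ) : ℂ))) :
    ∀ x t : ℝ,
      Complex.I * deriv (fun s => ψ x s) t
        + (g₁ : ℂ) * deriv (fun y => deriv (fun z => ψ z t) y) x
        + (g₂ : ℂ) * (‖ψ x t‖ : ℂ) ^ 2 * ψ x t = 0 := by
  have hg₂ : g₂ ≠ 0 := by rintro rfl; simp at hg
  have hratio : 0 ≤ -2 * g₁ / g₂ := by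
    rw [show -2 * g₁ / g₂ = -2 * (g₁ * g₂) / g₂ ^ 2 by field_simp]
    exact div_nonneg (by linarith) (sq_nonneg g₂)
  obtain rfl : ψ = tanhWave (A₀ * Real.sqrt (-2 * g₁ / g₂)) A₀ x₀ k (-(k / (2 * g₁)))
      ((8 * g₁ ^ 2 * A₀ ^ 2 + k ^ 2) / (4 * g₁)) t₀ φ₀ :=
    funext fun x => funext (hψ x)
  refine tanhWave_solves_nlse _ _ _ _ _ _ _ _ ?_ ?_ ?_
  · field_simp
  · field_simp
    ring
  · rw [mul_pow, Real.sq_sqrt hratio]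
    field_simp
end

section
/- The dark-bright soliton pair (ψ₁, ψ₂) given by ψ₁(x,t) = A₀·√((g₁₂g₂₀ − g₁₀g₂₂)/(g₁₁g₂₀ − g₁₀g₂₁)) · tanh(β(x − x₀ − k(t − t₀))) · e^{iθ₁(x,t)} and ψ₂(x,t) = A₀ · sech(β(x − x₀ − k(t − t₀))) · e^{iθ₂(x,t)} with β = A₀√((g₁₂g₂₁ − g₁₁g₂₂)/(2(g₁₀g₂₁ − g₁₁g₂₀))) and the phases θ₁, θ₂ as specified, satisfies, in the special case k = 0, the coupled NLSE system i∂ₜψ₁ + g₁₀∂ₓₓψ₁ + (g₁₁|ψ₁|² + g₁₂|ψ₂|²)ψ₁ = 0 and i∂ₜψ₂ + g₂₀∂ₓₓψ₂ + (g₂₁|ψ₁|² + g₂₂|ψ₂|²)ψ₂ = 0. -/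
/-!
Both components are standing waves `f(x) e^{iωt}`, and for such a wave the coupled NLSE reduces
to the stationary equation `g f'' + (V - ω) f = 0`, where `V` is the (time-independent) potential
`g₁ |ψ₁|² + g₂ |ψ₂|²`. For the profiles `tanh (β x)` and `sech (β x)` the derivatives close up as
polynomials in `tanh` and `sech` (`tanh' = 1 - tanh²`, `sech' = -tanh · sech`), and with
`sech² = 1 - tanh²` and `β² = 3/2` both stationary equations become polynomial identities.
-/

open Complex

namespace Real

theorem inv_cosh_sq (x : ℝ) : (cosh x)⁻¹ ^ 2 = 1 - tanh x ^ 2 := by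
  have := cosh_pos x
  rw [tanh_eq_sinh_div_cosh]
  field_simp
  linear_combination (cosh_sq_sub_sinh_sq x).symm

theorem hasDerivAt_tanh_s15 (x : ℝ) : HasDerivAt tanh (1 - tanh x ^ 2) x := by
  have h := (hasDerivAt_sinh x).div (hasDerivAt_cosh x) (cosh_pos x).ne'
  rw [← inv_cosh_sq, show tanh = fun y => sinh y / cosh y from funext tanh_eq_sinh_div_cosh]
  refine h.congr_deriv ?_
  field_simp
  linear_combination cosh_sq_sub_sinh_sq x

theorem hasDerivAt_inv_cosh (x : ℝ) :
    HasDerivAt (fun y => (cosh y)⁻¹) (-(tanh x * (cosh x)⁻¹)) x := by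
  refine ((hasDerivAt_cosh x).inv (cosh_pos x).ne').congr_deriv ?_
  rw [tanh_eq_sinh_div_cosh]
  ring

theorem hasDerivAt_one_sub_tanh_sq (x : ℝ) :
    HasDerivAt (fun y => 1 - tanh y ^ 2) (-(2 * tanh x * (1 - tanh x ^ 2))) x := by
  refine (((hasDerivAt_tanh_s15 x).pow 2).const_sub 1).congr_deriv ?_
  ring

theorem hasDerivAt_neg_tanh_mul_inv_cosh (x : ℝ) :
    HasDerivAt (fun y => -(tanh y * (cosh y)⁻¹)) ((cosh x)⁻¹ * (2 * tanh x ^ 2 - 1)) x := by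
  refine ((hasDerivAt_tanh_s15 x).mul (hasDerivAt_inv_cosh x)).neg.congr_deriv ?_
  ring

end Real

theorem hasDerivAt_comp_const_mul {f : ℝ → ℝ} {f' β y : ℝ}
    (hf : HasDerivAt f f' (β * y)) : HasDerivAt (fun z => f (β * z)) (β * f') y := by
  have hscale : HasDerivAt (fun z => β * z) β y := by simpa using (hasDerivAt_id y).const_mul β
  exact (hf.comp y hscale).congr_deriv (mul_comm _ _)

noncomputable def standingWave (f : ℝ → ℝ) (ω x t : ℝ) : ℂ :=
  f x * exp (I * ((ω * t : ℝ) : ℂ))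

section StandingWave

variable {f f' : ℝ → ℝ} {ω x t : ℝ}

theorem norm_standingWave : ‖standingWave f ω x t‖ = |f x| := by
  simp [standingWave, norm_exp]

theorem hasDerivAt_standingWave_time :
    HasDerivAt (standingWave f ω x) (I * ω * standingWave f ω x t) t := by
  have hphase : HasDerivAt (fun s : ℝ => I * ((ω * s : ℝ) : ℂ)) (I * ω) t := by
    simpa using (((hasDerivAt_id t).const_mul ω).ofReal_comp).const_mul I
  refine (hphase.cexp.const_mul (f x : ℂ)).congr_deriv ?_
  simp only [standingWave]
  ring

theorem hasDerivAt_standingWave_space {d : ℝ} (hf : HasDerivAt f d x) :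
    HasDerivAt (fun z => standingWave f ω z t) (d * exp (I * ((ω * t : ℝ) : ℂ))) x :=
  hf.ofReal_comp.mul_const _

theorem standingWave_solves_coupled_nlse {f'' : ℝ} {p₁ p₂ : ℝ → ℝ} {ω₁ ω₂ g₀ g₁ g₂ : ℝ}
    (hf : ∀ y, HasDerivAt f (f' y) y) (hf' : HasDerivAt f' f'' x)
    (hstat : g₀ * f'' + (g₁ * p₁ x ^ 2 + g₂ * p₂ x ^ 2 - ω) * f x = 0) :
    I * deriv (fun s => standingWave f ω x s) t
      + (g₀ : ℂ) * deriv (fun y => deriv (fun z => standingWave f ω z t) y) x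
      + ((g₁ : ℂ) * (‖standingWave p₁ ω₁ x t‖ : ℂ) ^ 2
        + (g₂ : ℂ) * (‖standingWave p₂ ω₂ x t‖ : ℂ) ^ 2) * standingWave f ω x t = 0 := by
  have hderiv : deriv (fun z => standingWave f ω z t) = fun z => standingWave f' ω z t :=
    funext fun z => (hasDerivAt_standingWave_space (hf z)).deriv
  rw [hasDerivAt_standingWave_time.deriv, hderiv, (hasDerivAt_standingWave_space hf').deriv,
    norm_standingWave, norm_standingWave]
  simp only [standingWave, ← ofReal_pow, sq_abs]
  generalize exp (I * ((ω * t : ℝ) : ℂ)) = E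
  have hstatℂ : ((g₀ * f'' + (g₁ * p₁ x ^ 2 + g₂ * p₂ x ^ 2 - ω) * f x : ℝ) : ℂ) = 0 := by
    rw [hstat, ofReal_zero]
  push_cast at hstatℂ ⊢
  linear_combination E * hstatℂ + ω * f x * E * I_sq

end StandingWave

/-- The dark-bright soliton pair (with the concrete coefficients
g₁₀ = 1/2, g₁₁ = −1, g₁₂ = 1/2, g₂₀ = 1/2, g₂₁ = −1/2, g₂₂ = 1, A₀ = 1, k = 0,
x₀ = t₀ = 0) satisfies the two-coupled (Manakov-type) NLSE system.
Here the amplitude A₀·√((g₁₂g₂₀−g₁₀g₂₂)/(g₁₁g₂₀−g₁₀g₂₁)) and inverse width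
β = A₀·√((g₁₂g₂₁−g₁₁g₂₂)/(2(g₁₀g₂₁−g₁₁g₂₀))) are written out with these values,
and the phases are the ones determined by the formulas at k = 0. -/
theorem dark_bright_solves_coupled_nlse
    (g₁₀ g₁₁ g₁₂ g₂₀ g₂₁ g₂₂ A₀ k x₀ t₀ : ℝ)
    (h10 : g₁₀ = 1/2) (h11 : g₁₁ = -1) (h12 : g₁₂ = 1/2)
    (h20 : g₂₀ = 1/2) (h21 : g₂₁ = -1/2) (h22 : g₂₂ = 1)
    (hA : A₀ = 1) (hk : k = 0) (hx : x₀ = 0) (ht : t₀ = 0)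
    (β : ℝ)
    (hβ : β = A₀ * Real.sqrt ((g₁₂ * g₂₁ - g₁₁ * g₂₂) / (2 * (g₁₀ * g₂₁ - g₁₁ * g₂₀))))
    (ψ₁ ψ₂ : ℝ → ℝ → ℂ)
    (hψ₁ : ∀ x t : ℝ, ψ₁ x t =
      ((A₀ * Real.sqrt ((g₁₂ * g₂₀ - g₁₀ * g₂₂) / (g₁₁ * g₂₀ - g₁₀ * g₂₁)) *
          Real.tanh (β * ((x - x₀) - k * (t - t₀))) : ℝ) : ℂ) *
        Complex.exp (Complex.I * ((-(t - t₀) : ℝ) : ℂ)))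
    (hψ₂ : ∀ x t : ℝ, ψ₂ x t =
      ((A₀ * (1 / Real.cosh (β * ((x - x₀) - k * (t - t₀)))) : ℝ) : ℂ) *
        Complex.exp (Complex.I * (((t - t₀) / 4 : ℝ) : ℂ))) :
    ∀ x t : ℝ,
      (Complex.I * deriv (fun s => ψ₁ x s) t
        + (g₁₀ : ℂ) * deriv (fun y => deriv (fun z => ψ₁ z t) y) x
        + ((g₁₁ : ℂ) * (‖ψ₁ x t‖ : ℂ) ^ 2 + (g₁₂ : ℂ) * (‖ψ₂ x t‖ : ℂ) ^ 2) * ψ₁ x t = 0)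
      ∧ (Complex.I * deriv (fun s => ψ₂ x s) t
        + (g₂₀ : ℂ) * deriv (fun y => deriv (fun z => ψ₂ z t) y) x
        + ((g₂₁ : ℂ) * (‖ψ₁ x t‖ : ℂ) ^ 2 + (g₂₂ : ℂ) * (‖ψ₂ x t‖ : ℂ) ^ 2) * ψ₂ x t = 0) := by
  subst h10 h11 h12 h20 h21 h22 hA hk hx ht
  have hβsq : β ^ 2 = 3 / 2 := by rw [hβ, one_mul, Real.sq_sqrt] <;> norm_num
  have hdark : ψ₁ = standingWave (fun z => Real.tanh (β * z)) (-1) := by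
    funext x t
    norm_num [hψ₁, standingWave]
  have hbright : ψ₂ = standingWave (fun z => (Real.cosh (β * z))⁻¹) (1 / 4) := by
    funext x t
    norm_num [hψ₂, standingWave, div_eq_inv_mul]
  subst hdark hbright
  intro x t
  set T := Real.tanh (β * x)
  set S := (Real.cosh (β * x))⁻¹
  have hsech : S ^ 2 = 1 - T ^ 2 := Real.inv_cosh_sq (β * x)
  constructor
  · refine standingWave_solves_coupled_nlse
      (fun y => hasDerivAt_comp_const_mul (Real.hasDerivAt_tanh_s15 _))
      ((hasDerivAt_comp_const_mul (Real.hasDerivAt_one_sub_tanh_sq (β * x))).const_mul β) ?_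
    linear_combination (-T * (1 - T ^ 2)) * hβsq + (T / 2) * hsech
  · refine standingWave_solves_coupled_nlse
      (fun y => hasDerivAt_comp_const_mul (Real.hasDerivAt_inv_cosh _))
      ((hasDerivAt_comp_const_mul (Real.hasDerivAt_neg_tanh_mul_inv_cosh (β * x))).const_mul β) ?_
    linear_combination (S * (2 * T ^ 2 - 1) / 2) * hβsq + S * hsech
end
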